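/- arXiv:math/0512543 — 3 statements merged into one kernel-verified Lean document; each statement's English description precedes it below -/
import Mathlib

section
/- (Closedness of the Weierstrass forms in ℝ³.) Let U : ℂ → ℝ and ψ₁, ψ₂ : ℂ → ℂ be smooth functions satisfying the Dirac equation ∂̄ψ₁ = Uψ₂ and ∂ψ₂ = −Uψ₁. Define f₁ = (i/2)(conj(ψ₂)² + ψ₁²), f₂ = (1/2)(conj(ψ₂)² − ψ₁²), f₃ = ψ₁·conj(ψ₂). Then Im(∂̄f_k) = 0 for k = 1, 2, 3; equivalently, each 1-form f_k dz + conj(f_k) dz̄ is closed, so the Weierstrass integrals x^k = x^k(0) + ∫ (f_k dz + conj(f_k) dz̄) are well defined on simply connected domains. -/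
/-- The Wirtinger derivative `∂f = (1/2)(∂f/∂x − i ∂f/∂y)`. -/
noncomputable def wDeriv (f : ℂ → ℂ) (z : ℂ) : ℂ :=
  (fderiv ℝ f z 1 - Complex.I * fderiv ℝ f z Complex.I) / 2

/-- The Wirtinger derivative `∂̄f = (1/2)(∂f/∂x + i ∂f/∂y)`. -/
noncomputable def wDerivBar (f : ℂ → ℂ) (z : ℂ) : ℂ :=
  (fderiv ℝ f z 1 + Complex.I * fderiv ℝ f z Complex.I) / 2

lemma fderiv_conj_comp (f : ℂ → ℂ) (z v : ℂ) :
    fderiv ℝ (fun w => starRingEnd ℂ (f w)) z v = starRingEnd ℂ (fderiv ℝ f z v) := by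
  have h : (fun w => starRingEnd ℂ (f w)) = (Complex.conjCLE : ℂ → ℂ) ∘ f := rfl
  rw [h, Complex.conjCLE.comp_fderiv]
  rfl

lemma wDerivBar_conj (f : ℂ → ℂ) (z : ℂ) :
    wDerivBar (fun w => starRingEnd ℂ (f w)) z = starRingEnd ℂ (wDeriv f z) := by
  simp only [wDerivBar, wDeriv, fderiv_conj_comp]
  simp [map_sub, map_div₀, map_mul, Complex.conj_I, map_ofNat]

lemma wDerivBar_mul (f g : ℂ → ℂ) (z : ℂ) (hf : DifferentiableAt ℝ f z)
    (hg : DifferentiableAt ℝ g z) :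
    wDerivBar (fun w => f w * g w) z = f z * wDerivBar g z + wDerivBar f z * g z := by
  simp only [wDerivBar, fderiv_fun_mul hf hg, ContinuousLinearMap.add_apply,
    ContinuousLinearMap.smul_apply, smul_eq_mul]
  ring

lemma wDeriv_mul (f g : ℂ → ℂ) (z : ℂ) (hf : DifferentiableAt ℝ f z)
    (hg : DifferentiableAt ℝ g z) :
    wDeriv (fun w => f w * g w) z = f z * wDeriv g z + wDeriv f z * g z := by
  simp only [wDeriv, fderiv_fun_mul hf hg, ContinuousLinearMap.add_apply,
    ContinuousLinearMap.smul_apply, smul_eq_mul]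
  ring

lemma wDerivBar_const_mul (c : ℂ) (f : ℂ → ℂ) (z : ℂ) (hf : DifferentiableAt ℝ f z) :
    wDerivBar (fun w => c * f w) z = c * wDerivBar f z := by
  simp only [wDerivBar, fderiv_const_mul hf, ContinuousLinearMap.smul_apply, smul_eq_mul]
  ring

lemma wDerivBar_add (f g : ℂ → ℂ) (z : ℂ) (hf : DifferentiableAt ℝ f z)
    (hg : DifferentiableAt ℝ g z) :
    wDerivBar (fun w => f w + g w) z = wDerivBar f z + wDerivBar g z := by
  simp only [wDerivBar, fderiv_fun_add hf hg, ContinuousLinearMap.add_apply]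
  ring

lemma wDerivBar_sub (f g : ℂ → ℂ) (z : ℂ) (hf : DifferentiableAt ℝ f z)
    (hg : DifferentiableAt ℝ g z) :
    wDerivBar (fun w => f w - g w) z = wDerivBar f z - wDerivBar g z := by
  simp only [wDerivBar, fderiv_fun_sub hf hg, ContinuousLinearMap.sub_apply]
  ring

/-- Closedness of the Weierstrass forms in `ℝ³`: if `ψ` solves the Dirac
equation `∂̄ψ₁ = Uψ₂`, `∂ψ₂ = −Uψ₁` with real potential `U`, then for
`f₁ = (i/2)(ψ̄₂² + ψ₁²)`, `f₂ = (1/2)(ψ̄₂² − ψ₁²)`, `f₃ = ψ₁ψ̄₂` one has `Im(∂̄f_k) = 0`,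
so the forms `f_k dz + f̄_k dz̄` are closed. -/
theorem weierstrass_forms_closed_R3 (U : ℂ → ℝ) (ψ₁ ψ₂ : ℂ → ℂ)
    (hU : ContDiff ℝ (⊤ : ℕ∞) U) (hψ₁ : ContDiff ℝ (⊤ : ℕ∞) ψ₁) (hψ₂ : ContDiff ℝ (⊤ : ℕ∞) ψ₂)
    (hDirac₁ : ∀ z : ℂ, wDerivBar ψ₁ z = (U z : ℂ) * ψ₂ z)
    (hDirac₂ : ∀ z : ℂ, wDeriv ψ₂ z = -(U z : ℂ) * ψ₁ z) :
    (∀ z : ℂ, (wDerivBar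
        (fun w => (Complex.I / 2) * ((starRingEnd ℂ (ψ₂ w)) ^ 2 + (ψ₁ w) ^ 2)) z).im = 0)
    ∧ (∀ z : ℂ, (wDerivBar
        (fun w => (1 / 2 : ℂ) * ((starRingEnd ℂ (ψ₂ w)) ^ 2 - (ψ₁ w) ^ 2)) z).im = 0)
    ∧ (∀ z : ℂ, (wDerivBar
        (fun w => ψ₁ w * starRingEnd ℂ (ψ₂ w)) z).im = 0) := by
  have d1 : ∀ z, DifferentiableAt ℝ ψ₁ z := fun z => (hψ₁.differentiable (by simp)) z
  have d2 : ∀ z, DifferentiableAt ℝ ψ₂ z := fun z => (hψ₂.differentiable (by simp)) z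
  have d2c : ∀ z, DifferentiableAt ℝ (fun w => starRingEnd ℂ (ψ₂ w)) z := fun z =>
    Complex.conjCLE.differentiableAt.comp z (d2 z)
  -- ∂̄(ψ₁²)
  have hsq1 : ∀ z, wDerivBar (fun w => (ψ₁ w) ^ 2) z = 2 * (U z : ℂ) * ψ₁ z * ψ₂ z := by
    intro z
    have : wDerivBar (fun w => ψ₁ w * ψ₁ w) z = ψ₁ z * wDerivBar ψ₁ z + wDerivBar ψ₁ z * ψ₁ z :=
      wDerivBar_mul _ _ _ (d1 z) (d1 z)
    simp only [← sq] at this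
    rw [this, hDirac₁]; ring
  -- ∂̄(conj ψ₂ ²)
  have hsq2 : ∀ z, wDerivBar (fun w => (starRingEnd ℂ (ψ₂ w)) ^ 2) z
      = -2 * (U z : ℂ) * starRingEnd ℂ (ψ₁ z * ψ₂ z) := by
    intro z
    have h1 : wDerivBar (fun w => starRingEnd ℂ (ψ₂ w) * starRingEnd ℂ (ψ₂ w)) z
        = starRingEnd ℂ (ψ₂ z) * wDerivBar (fun w => starRingEnd ℂ (ψ₂ w)) z
          + wDerivBar (fun w => starRingEnd ℂ (ψ₂ w)) z * starRingEnd ℂ (ψ₂ z) :=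
      wDerivBar_mul _ _ _ (d2c z) (d2c z)
    simp only [← sq] at h1
    rw [h1, wDerivBar_conj, hDirac₂]
    simp [map_mul]
    ring
  -- ∂̄(ψ₁ * conj ψ₂)
  have h3 : ∀ z, wDerivBar (fun w => ψ₁ w * starRingEnd ℂ (ψ₂ w)) z
      = (U z : ℂ) * (ψ₂ z * starRingEnd ℂ (ψ₂ z) - ψ₁ z * starRingEnd ℂ (ψ₁ z)) := by
    intro z
    rw [wDerivBar_mul _ _ _ (d1 z) (d2c z), wDerivBar_conj, hDirac₂, hDirac₁]
    simp [map_mul]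
    ring
  refine ⟨?_, ?_, ?_⟩
  · intro z
    have hadd : wDerivBar (fun w => (starRingEnd ℂ (ψ₂ w)) ^ 2 + (ψ₁ w) ^ 2) z
        = wDerivBar (fun w => (starRingEnd ℂ (ψ₂ w)) ^ 2) z
          + wDerivBar (fun w => (ψ₁ w) ^ 2) z :=
      wDerivBar_add _ _ _ ((d2c z).pow 2) ((d1 z).pow 2)
    rw [wDerivBar_const_mul _ (fun w => (starRingEnd ℂ (ψ₂ w)) ^ 2 + (ψ₁ w) ^ 2) _ (((d2c z).pow 2).add ((d1 z).pow 2)), hadd, hsq1, hsq2]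
    set a := ψ₁ z * ψ₂ z
    have : Complex.I / 2 * (-2 * (U z : ℂ) * starRingEnd ℂ a + 2 * (U z : ℂ) * a)
        = Complex.I * (U z : ℂ) * (a - starRingEnd ℂ a) := by ring
    rw [show 2 * (U z : ℂ) * ψ₁ z * ψ₂ z = 2 * (U z : ℂ) * a by ring, this]
    simp [Complex.mul_im, Complex.sub_im, Complex.sub_re]
  · intro z
    have hsub : wDerivBar (fun w => (starRingEnd ℂ (ψ₂ w)) ^ 2 - (ψ₁ w) ^ 2) z
        = wDerivBar (fun w => (starRingEnd ℂ (ψ₂ w)) ^ 2) z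
          - wDerivBar (fun w => (ψ₁ w) ^ 2) z :=
      wDerivBar_sub _ _ _ ((d2c z).pow 2) ((d1 z).pow 2)
    rw [wDerivBar_const_mul _ (fun w => (starRingEnd ℂ (ψ₂ w)) ^ 2 - (ψ₁ w) ^ 2) _ (((d2c z).pow 2).sub ((d1 z).pow 2)), hsub, hsq1, hsq2]
    set a := ψ₁ z * ψ₂ z
    have : (1 / 2 : ℂ) * (-2 * (U z : ℂ) * starRingEnd ℂ a - 2 * (U z : ℂ) * a)
        = -(U z : ℂ) * (starRingEnd ℂ a + a) := by ring
    rw [show 2 * (U z : ℂ) * ψ₁ z * ψ₂ z = 2 * (U z : ℂ) * a by ring, this]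
    simp [Complex.mul_im, Complex.add_im]
  · intro z
    rw [h3]
    simp [Complex.mul_im, Complex.sub_im, Complex.mul_re, Complex.mul_im]
    exact Or.inr (by ring)
end

section
/- (Conservation law for the modified Novikov–Veselov equation.) Let U : ℝ × ℂ → ℝ and V : ℝ × ℂ → ℂ be smooth functions of (t, z) satisfying the constraint ∂̄V = ∂(U²) and the mNV equation U_t = (U_{zzz} + 3U_z V + (3/2) U V_z) + (U_{z̄z̄z̄} + 3U_{z̄} V̄ + (3/2) U V̄_{z̄}), where subscripts z, z̄ denote Wirtinger derivatives and V̄ is the complex conjugate of V. Then U·U_t = ∂( U U_{zz} − (1/2)U_z² + (3/2)U²V ) + ∂̄( U U_{z̄z̄} − (1/2)U_{z̄}² + (3/2)U²V̄ ); i.e. (U²)_t is a total divergence, so the Willmore-type integral ∫ U² dz∧dz̄ over a torus is preserved by the mNV flow. -/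
noncomputable def wgen (c : ℂ) (f : ℂ → ℂ) (z : ℂ) : ℂ :=
  (fderiv ℝ f z 1 + c * fderiv ℝ f z Complex.I) / 2

lemma wDeriv_eq : wDeriv = wgen (-Complex.I) := by
  funext f z; simp only [wDeriv, wgen]; ring

lemma wDerivBar_eq : wDerivBar = wgen Complex.I := rfl

lemma wgen_contDiff (c : ℂ) {f : ℂ → ℂ} (hf : ContDiff ℝ (⊤ : ℕ∞) f) :
    ContDiff ℝ (⊤ : ℕ∞) (wgen c f) := by
  have h1 : ContDiff ℝ (⊤ : ℕ∞) (fderiv ℝ f) := hf.fderiv_right (by simp)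
  exact (((h1.clm_apply contDiff_const).add
    (contDiff_const.mul (h1.clm_apply contDiff_const)))).div_const 2

lemma wgen_add (c : ℂ) (f g : ℂ → ℂ) (z : ℂ) (hf : DifferentiableAt ℝ f z)
    (hg : DifferentiableAt ℝ g z) :
    wgen c (fun w => f w + g w) z = wgen c f z + wgen c g z := by
  simp only [wgen, fderiv_fun_add hf hg, ContinuousLinearMap.add_apply]
  ring

lemma wgen_sub (c : ℂ) (f g : ℂ → ℂ) (z : ℂ) (hf : DifferentiableAt ℝ f z)
    (hg : DifferentiableAt ℝ g z) :
    wgen c (fun w => f w - g w) z = wgen c f z - wgen c g z := by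
  simp only [wgen, fderiv_fun_sub hf hg, ContinuousLinearMap.sub_apply]
  ring

lemma wgen_mul (c : ℂ) (f g : ℂ → ℂ) (z : ℂ) (hf : DifferentiableAt ℝ f z)
    (hg : DifferentiableAt ℝ g z) :
    wgen c (fun w => f w * g w) z = wgen c f z * g z + f z * wgen c g z := by
  simp only [wgen, fderiv_fun_mul hf hg, ContinuousLinearMap.add_apply,
    ContinuousLinearMap.smul_apply, smul_eq_mul]
  ring

lemma wgen_const_mul (c a : ℂ) (f : ℂ → ℂ) (z : ℂ) (hf : DifferentiableAt ℝ f z) :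
    wgen c (fun w => a * f w) z = a * wgen c f z := by
  simp only [wgen, fderiv_const_mul hf, ContinuousLinearMap.smul_apply, smul_eq_mul]
  ring

lemma wgen_sq (c : ℂ) (f : ℂ → ℂ) (z : ℂ) (hf : DifferentiableAt ℝ f z) :
    wgen c (fun w => f w ^ 2) z = 2 * f z * wgen c f z := by
  have := wgen_mul c f f z hf hf
  simp only [← sq] at this
  rw [this]; ring

lemma wgen_key (c : ℂ) (f W : ℂ → ℂ) (hf : ContDiff ℝ (⊤ : ℕ∞) f) (hW : ContDiff ℝ (⊤ : ℕ∞) W) (z : ℂ) :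
    wgen c (fun w =>
        f w * wgen c (fun w' => wgen c (fun w'' => f w'') w') w
          - (1 / 2) * (wgen c (fun w' => f w') w) ^ 2
          + (3 / 2) * f w ^ 2 * W w) z
      = f z * wgen c (fun w => wgen c (fun w' => wgen c (fun w'' => f w'') w') w) z
        + 3 * f z * wgen c (fun w => f w) z * W z
        + (3 / 2) * f z ^ 2 * wgen c W z := by
  show wgen c (fun w => f w * wgen c (wgen c f) w - (1 / 2) * (wgen c f w) ^ 2
      + (3 / 2) * f w ^ 2 * W w) z
    = f z * wgen c (wgen c (wgen c f)) z + 3 * f z * wgen c f z * W z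
        + (3 / 2) * f z ^ 2 * wgen c W z
  have hf1 : ContDiff ℝ (⊤ : ℕ∞) (wgen c f) := wgen_contDiff c hf
  have hf2 : ContDiff ℝ (⊤ : ℕ∞) (wgen c (wgen c f)) := wgen_contDiff c hf1
  have d0 : DifferentiableAt ℝ f z := (hf.differentiable (by simp)).differentiableAt
  have d1 : DifferentiableAt ℝ (wgen c f) z := (hf1.differentiable (by simp)).differentiableAt
  have d2 : DifferentiableAt ℝ (wgen c (wgen c f)) z :=
    (hf2.differentiable (by simp)).differentiableAt
  have dW : DifferentiableAt ℝ W z := (hW.differentiable (by simp)).differentiableAt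
  rw [wgen_add c (fun w => f w * wgen c (wgen c f) w - (1 / 2) * (wgen c f w) ^ 2)
      (fun w => (3 / 2) * f w ^ 2 * W w) z
      ((d0.mul d2).sub ((d1.pow 2).const_mul _))
      (((d0.pow 2).const_mul _).mul dW),
    wgen_sub c (fun w => f w * wgen c (wgen c f) w) (fun w => (1 / 2) * (wgen c f w) ^ 2) z
      (d0.mul d2) ((d1.pow 2).const_mul _),
    wgen_mul c f (wgen c (wgen c f)) z d0 d2,
    wgen_const_mul c (1 / 2) (fun w => wgen c f w ^ 2) z (d1.pow 2),
    wgen_sq c (wgen c f) z d1,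
    wgen_mul c (fun w => (3 / 2) * f w ^ 2) W z ((d0.pow 2).const_mul _) dW,
    wgen_const_mul c (3 / 2) (fun w => f w ^ 2) z (d0.pow 2),
    wgen_sq c f z d0]
  ring

/-- Conservation law for the modified Novikov–Veselov equation: if the
real potential `U(t,z)` and `V(t,z)` satisfy the constraint `∂̄V = ∂(U²)` and the mNV
equation, then `U·U_t` is a total divergence
`U U_t = ∂(UU_{zz} − U_z²/2 + (3/2)U²V) + ∂̄(UU_{z̄z̄} − U_{z̄}²/2 + (3/2)U²V̄)`,
so `∫ U² dz∧dz̄` over a torus is preserved by the mNV flow. -/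
theorem mNV_conservation_law (U : ℝ → ℂ → ℝ) (V : ℝ → ℂ → ℂ)
    (hU : ContDiff ℝ (⊤ : ℕ∞) (fun p : ℝ × ℂ => U p.1 p.2))
    (hV : ContDiff ℝ (⊤ : ℕ∞) (fun p : ℝ × ℂ => V p.1 p.2))
    (hconstraint : ∀ t : ℝ, ∀ z : ℂ,
      wDerivBar (V t) z = wDeriv (fun w => ((U t w : ℂ)) ^ 2) z)
    (hmNV : ∀ t : ℝ, ∀ z : ℂ,
      ((deriv (fun s => U s z) t : ℝ) : ℂ)
        = (wDeriv (fun w => wDeriv (fun w' => wDeriv (fun w'' => (U t w'' : ℂ)) w') w) z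
            + 3 * wDeriv (fun w => (U t w : ℂ)) z * V t z
            + (3 / 2) * (U t z : ℂ) * wDeriv (V t) z)
          + (wDerivBar
              (fun w => wDerivBar (fun w' => wDerivBar (fun w'' => (U t w'' : ℂ)) w') w) z
            + 3 * wDerivBar (fun w => (U t w : ℂ)) z * starRingEnd ℂ (V t z)
            + (3 / 2) * (U t z : ℂ)
                * wDerivBar (fun w => starRingEnd ℂ (V t w)) z)) :
    ∀ t : ℝ, ∀ z : ℂ,
      (U t z : ℂ) * ((deriv (fun s => U s z) t : ℝ) : ℂ)
        = wDeriv (fun w =>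
            (U t w : ℂ) * wDeriv (fun w' => wDeriv (fun w'' => (U t w'' : ℂ)) w') w
              - (1 / 2) * (wDeriv (fun w' => (U t w' : ℂ)) w) ^ 2
              + (3 / 2) * (U t w : ℂ) ^ 2 * V t w) z
          + wDerivBar (fun w =>
              (U t w : ℂ) * wDerivBar (fun w' => wDerivBar (fun w'' => (U t w'' : ℂ)) w') w
                - (1 / 2) * (wDerivBar (fun w' => (U t w' : ℂ)) w) ^ 2
                + (3 / 2) * (U t w : ℂ) ^ 2 * starRingEnd ℂ (V t w)) z := by
  intro t z
  have hf : ContDiff ℝ (⊤ : ℕ∞) (fun w : ℂ => ((U t w : ℂ))) :=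
    Complex.ofRealCLM.contDiff.comp (hU.comp (contDiff_const.prodMk contDiff_id))
  have hVt : ContDiff ℝ (⊤ : ℕ∞) (V t) := hV.comp (contDiff_const.prodMk contDiff_id)
  have hVbar : ContDiff ℝ (⊤ : ℕ∞) (fun w => starRingEnd ℂ (V t w)) :=
    Complex.conjCLE.contDiff.comp hVt
  have k1 := wgen_key (-Complex.I) (fun w => ((U t w : ℂ))) (V t) hf hVt z
  have k2 := wgen_key Complex.I (fun w => ((U t w : ℂ)))
    (fun w => starRingEnd ℂ (V t w)) hf hVbar z
  beta_reduce at k1 k2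
  simp only [wDeriv_eq, wDerivBar_eq] at hmNV ⊢
  rw [hmNV t z, k1, k2]
  ring
end

section
/- (Shift of quasimomenta under multiplication by a character.) Let U, V : ℂ → ℂ be smooth, κ = (κ₁, κ₂) ∈ ℝ², and define ψ_{±κ}(z) = exp(±2πi(κ₁ x + κ₂ y)) for z = x + iy. Set α(κ) = ((κ₁ + iκ₂)/2, (−iκ₁ + κ₂)/2) ∈ ℂ². If a differentiable φ : ℂ → ℂ² satisfies [𝒟₀ + diag(ψ_{−κ} U, ψ_{κ} V) + T_k] φ = 0, then φ' = (ψ_{−κ} φ₁, φ₂) satisfies [𝒟₀ + diag(U, V) + T_{k + α(κ)}] φ' = 0. -/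
/-- The (real-linear) differential of `w ↦ c₁ * w.re + c₂ * w.im`. -/
noncomputable def expLin (c₁ c₂ : ℂ) : ℂ →L[ℝ] ℂ :=
  c₁ • (Complex.ofRealCLM.comp Complex.reCLM) + c₂ • (Complex.ofRealCLM.comp Complex.imCLM)

lemma hasFDerivAt_expchar (c₁ c₂ : ℂ) (z : ℂ) :
    HasFDerivAt (fun w : ℂ => Complex.exp (c₁ * w.re + c₂ * w.im))
      (Complex.exp (c₁ * z.re + c₂ * z.im) • expLin c₁ c₂) z := by
  have hL : HasFDerivAt (fun w : ℂ => c₁ * w.re + c₂ * w.im) (expLin c₁ c₂) z := by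
    have := (expLin c₁ c₂).hasFDerivAt (x := z)
    convert this using 2
    simp [expLin]
  have hexp := (Complex.hasDerivAt_exp (c₁ * z.re + c₂ * z.im)).hasFDerivAt.restrictScalars ℝ
  have := hexp.comp z hL
  refine this.congr_fderiv ?_
  ext v
  simp [expLin, smul_eq_mul]
  ring

lemma wDerivBar_char_mul (c₁ c₂ : ℂ) (φ : ℂ → ℂ) (hφ : Differentiable ℝ φ) (z : ℂ) :
    wDerivBar (fun w => Complex.exp (c₁ * w.re + c₂ * w.im) * φ w) z
      = Complex.exp (c₁ * z.re + c₂ * z.im) * wDerivBar φ z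
        + ((c₁ + Complex.I * c₂) / 2) * Complex.exp (c₁ * z.re + c₂ * z.im) * φ z := by
  have he := hasFDerivAt_expchar c₁ c₂ z
  have h := he.fun_mul (hφ z).hasFDerivAt
  rw [wDerivBar, h.fderiv, wDerivBar]
  simp [expLin, smul_eq_mul]
  ring

/-- Shift of quasimomenta under multiplication by the character
`ψ_{−κ}(z) = e^{−2πi(κ₁x + κ₂y)}`: if `[𝒟₀ + diag(ψ_{−κ}U, ψ_{κ}V) + T_k]φ = 0`
then `φ' = (ψ_{−κ}φ₁, φ₂)` satisfies `[𝒟₀ + diag(U, V) + T_{k+α(κ)}]φ' = 0`,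
where `α(κ) = ((κ₁ + iκ₂)/2, (−iκ₁ + κ₂)/2)`. -/
theorem quasimomentum_shift (U V : ℂ → ℂ) (κ₁ κ₂ : ℝ) (k₁ k₂ : ℂ) (φ₁ φ₂ : ℂ → ℂ)
    (hU : ContDiff ℝ (⊤ : ℕ∞) U) (hV : ContDiff ℝ (⊤ : ℕ∞) V)
    (hφ₁ : Differentiable ℝ φ₁) (hφ₂ : Differentiable ℝ φ₂)
    (heq₁ : ∀ z : ℂ,
      wDeriv φ₂ z
        + Complex.exp (-(2 * Real.pi * Complex.I * (κ₁ * z.re + κ₂ * z.im))) * U z * φ₁ z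
        + Real.pi * Complex.I * (k₁ - Complex.I * k₂) * φ₂ z = 0)
    (heq₂ : ∀ z : ℂ,
      -(wDerivBar φ₁ z)
        + Complex.exp (2 * Real.pi * Complex.I * (κ₁ * z.re + κ₂ * z.im)) * V z * φ₂ z
        - Real.pi * Complex.I * (k₁ + Complex.I * k₂) * φ₁ z = 0) :
    (∀ z : ℂ,
      wDeriv φ₂ z
        + U z * (Complex.exp (-(2 * Real.pi * Complex.I * (κ₁ * z.re + κ₂ * z.im))) * φ₁ z)
        + Real.pi * Complex.I
            * ((k₁ + ((κ₁ : ℂ) + Complex.I * κ₂) / 2)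
              - Complex.I * (k₂ + (-(Complex.I * κ₁) + κ₂) / 2)) * φ₂ z = 0)
    ∧ (∀ z : ℂ,
      -(wDerivBar (fun w =>
          Complex.exp (-(2 * Real.pi * Complex.I * (κ₁ * w.re + κ₂ * w.im))) * φ₁ w) z)
        + V z * φ₂ z
        - Real.pi * Complex.I
            * ((k₁ + ((κ₁ : ℂ) + Complex.I * κ₂) / 2)
              + Complex.I * (k₂ + (-(Complex.I * κ₁) + κ₂) / 2))
            * (Complex.exp (-(2 * Real.pi * Complex.I * (κ₁ * z.re + κ₂ * z.im))) * φ₁ z)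
        = 0) := by
  set c₁ : ℂ := -(2 * Real.pi * Complex.I * κ₁) with hc₁
  set c₂ : ℂ := -(2 * Real.pi * Complex.I * κ₂) with hc₂
  have harg : ∀ w : ℂ, -(2 * Real.pi * Complex.I * (κ₁ * w.re + κ₂ * w.im))
      = c₁ * w.re + c₂ * w.im := by intro w; rw [hc₁, hc₂]; ring
  constructor
  · intro z
    rw [harg z]
    have h1 := heq₁ z
    rw [harg z] at h1
    linear_combination h1 + (Real.pi * κ₁ * φ₂ z / 2 * Complex.I) * Complex.I_sq
  · intro z
    have hfun : (fun w => Complex.exp (-(2 * Real.pi * Complex.I * (κ₁ * w.re + κ₂ * w.im)))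
        * φ₁ w) = fun w => Complex.exp (c₁ * w.re + c₂ * w.im) * φ₁ w := by
      funext w; rw [harg w]
    rw [hfun, harg z, wDerivBar_char_mul c₁ c₂ φ₁ hφ₁ z]
    have h2 := heq₂ z
    set E : ℂ := Complex.exp (c₁ * z.re + c₂ * z.im) with hEdef
    set F : ℂ := Complex.exp (2 * Real.pi * Complex.I * (κ₁ * z.re + κ₂ * z.im)) with hFdef
    have hFE : F * E = 1 := by
      rw [hFdef, hEdef, ← Complex.exp_add,
        show 2 * Real.pi * Complex.I * (κ₁ * z.re + κ₂ * z.im) + (c₁ * z.re + c₂ * z.im) = 0 by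
          rw [hc₁, hc₂]; ring, Complex.exp_zero]
    linear_combination E * h2 - (V z * φ₂ z) * hFE
      + (Real.pi * κ₁ * E * φ₁ z / 2 * Complex.I) * Complex.I_sq
end
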